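/- Let Q > 0. For each n ∈ ℤ define a vector v_n(λ) = (a_n(λ), b_n(λ)) ∈ ℝ² for λ > 0 by: v_{−1−n}(λ) = ( λ^{n+1}/(2·(n+1)!), (λ^n/n!)·(log(λ/√Q) − H_n) ) for n ≥ 0, where H_n = ∑_{j=1}^{n} 1/j is the n-th harmonic number (H_0 = 0); v_0(λ) = (1/2, 1/λ); and v_n(λ) = (0, (−1)^n · n!/λ^{n+1}) for n ≥ 1. Then: (i) for every n ∈ ℤ, the componentwise derivative of v_n in λ equals v_{n+1}; and (ii) for every integer k ≥ 1, λ·v_{−k}(λ) − 2N(v_{−k}(λ)) = (μ + (k + 1/2)·id)(v_{−k−1}(λ)), where N : ℝ² → ℝ² is the nilpotent map N(a, b) = (0, a) and μ : ℝ² → ℝ² is the diagonal map μ(a, b) = (a/2, −b/2). -/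

import Mathlib

open Finset

/-- The flat period vectors `I_α^{(n)}(λ)` of ℂP¹ (components in the basis `{1, P}` of
`H^*(ℂP¹)`, identified with `ℝ²`): `v_{-1-n}(λ) = (λ^{n+1}/(2(n+1)!),
(λ^n/n!)(log(λ/√Q) - H_n))` for `n ≥ 0`, `v_0(λ) = (1/2, 1/λ)`, and
`v_n(λ) = (0, (-1)^n n!/λ^{n+1})` for `n ≥ 1`. -/
noncomputable def cp1FlatPeriod (Q : ℝ) : ℤ → ℝ → ℝ × ℝ := fun n lam =>
  if n = 0 then (1 / 2, 1 / lam)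
  else if 0 < n then
    (0, (-1) ^ n.toNat * (Nat.factorial n.toNat : ℝ) / lam ^ (n.toNat + 1))
  else
    (lam ^ ((-n - 1).toNat + 1) / (2 * (Nat.factorial ((-n - 1).toNat + 1) : ℝ)),
     lam ^ (-n - 1).toNat / (Nat.factorial ((-n - 1).toNat) : ℝ) *
       (Real.log (lam / Real.sqrt Q) -
         ∑ j ∈ Finset.range ((-n - 1).toNat), 1 / ((j : ℝ) + 1)))

lemma cp1_zero (Q : ℝ) : cp1FlatPeriod Q 0 = fun lam => ((1:ℝ) / 2, 1 / lam) := by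
  funext lam; simp [cp1FlatPeriod]

lemma cp1_pos (Q : ℝ) (m : ℕ) : cp1FlatPeriod Q ((m:ℤ) + 1) =
    fun lam => ((0:ℝ), (-1) ^ (m+1) * ((Nat.factorial (m+1)) : ℝ) / lam ^ (m + 2)) := by
  funext lam
  have h1 : ((m:ℤ) + 1) ≠ 0 := by omega
  have h2 : (0:ℤ) < (m:ℤ) + 1 := by omega
  have h3 : ((m:ℤ) + 1).toNat = m + 1 := by omega
  simp only [cp1FlatPeriod]
  rw [if_neg h1, if_pos h2, h3]

lemma cp1_neg (Q : ℝ) (m : ℕ) : cp1FlatPeriod Q (-((m:ℤ) + 1)) =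
    fun lam => (lam ^ (m+1) / (2 * ((Nat.factorial (m+1)) : ℝ)),
      lam ^ m / ((Nat.factorial m) : ℝ) *
        (Real.log (lam / Real.sqrt Q) - ∑ j ∈ Finset.range m, 1 / ((j : ℝ) + 1))) := by
  funext lam
  have h1 : (-((m:ℤ) + 1)) ≠ 0 := by omega
  have h2 : ¬ ((0:ℤ) < -((m:ℤ) + 1)) := by omega
  have h3 : (-(-((m:ℤ) + 1)) - 1).toNat = m := by omega
  simp only [cp1FlatPeriod]
  rw [if_neg h1, if_neg h2, h3]

lemma hasDerivAt_logpart (Q lam : ℝ) (hQ : 0 < Q) (hlam : 0 < lam) :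
    HasDerivAt (fun x : ℝ => Real.log (x / Real.sqrt Q)) (1 / lam) lam := by
  have hs : Real.sqrt Q ≠ 0 := (Real.sqrt_pos.mpr hQ).ne'
  have h1 : HasDerivAt (fun x : ℝ => x / Real.sqrt Q) (1 / Real.sqrt Q) lam :=
    (hasDerivAt_id lam).div_const _
  have h2 := h1.log (div_ne_zero hlam.ne' hs)
  convert h2 using 1
  field_simp

/-- (i) The flat period vectors satisfy `∂_λ v_n = v_{n+1}`, and (ii) for `k ≥ 1` the
recursion `λ·v_{-k} - 2 N(v_{-k}) = (μ + (k + 1/2))·v_{-k-1}` holds, where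
`N(a,b) = (0,a)` is cup product by the hyperplane class `P` and `μ(a,b) = (a/2, -b/2)`
is the Hodge grading operator. -/
theorem cp1_flat_period_vectors (Q : ℝ) (hQ : 0 < Q) :
    (∀ n : ℤ, ∀ lam : ℝ, 0 < lam →
      HasDerivAt (cp1FlatPeriod Q n) (cp1FlatPeriod Q (n + 1) lam) lam) ∧
    (∀ k : ℕ, 1 ≤ k → ∀ lam : ℝ, 0 < lam →
      lam • cp1FlatPeriod Q (-(k : ℤ)) lam
          - (2 : ℝ) • ((0 : ℝ), (cp1FlatPeriod Q (-(k : ℤ)) lam).1)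
        = ((cp1FlatPeriod Q (-(k : ℤ) - 1) lam).1 / 2,
            -(cp1FlatPeriod Q (-(k : ℤ) - 1) lam).2 / 2)
          + ((k : ℝ) + 1 / 2) • cp1FlatPeriod Q (-(k : ℤ) - 1) lam) := by
  constructor
  · intro n lam hlam
    have hlam' : lam ≠ 0 := hlam.ne'
    rcases lt_trichotomy n 0 with hn | rfl | hn
    · -- n ≤ -1
      obtain ⟨m, rfl⟩ : ∃ m : ℕ, n = -((m:ℤ)+1) := ⟨(-n-1).toNat, by omega⟩
      rcases m with _ | m
      · -- n = -1
        rw [show (-(((0:ℕ):ℤ)+1) + 1) = (0:ℤ) by norm_num, cp1_zero, cp1_neg]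
        have h1 := (hasDerivAt_pow (0+1) lam).div_const (2 * ((Nat.factorial (0+1)):ℝ))
        have h2 : HasDerivAt (fun x : ℝ =>
            x ^ 0 / ((Nat.factorial 0):ℝ) *
              (Real.log (x / Real.sqrt Q) - ∑ j ∈ Finset.range 0, 1 / ((j : ℝ) + 1)))
            (1 / lam) lam := by
          have h3 := ((hasDerivAt_pow 0 lam).div_const ((Nat.factorial 0):ℝ)).mul
            ((hasDerivAt_logpart Q lam hQ hlam).sub_const
              (∑ j ∈ Finset.range 0, 1 / ((j : ℝ) + 1)))
          refine (h3).congr_deriv (Eq.symm ?_)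
          all_goals norm_num [Nat.factorial]
        refine (h1.prodMk h2).congr_deriv (Eq.symm ?_)
        simp only [Nat.add_sub_cancel, Prod.mk.injEq]
        constructor <;> norm_num [Nat.factorial]
      · -- n = -(m+2)
        rw [show (-(((m+1:ℕ):ℤ)+1) + 1) = -((m:ℤ)+1) by push_cast; ring, cp1_neg, cp1_neg]
        have h1 := (hasDerivAt_pow (m+1+1) lam).div_const (2 * ((Nat.factorial (m+1+1)):ℝ))
        have h2 := ((hasDerivAt_pow (m+1) lam).div_const ((Nat.factorial (m+1)):ℝ)).mul
          ((hasDerivAt_logpart Q lam hQ hlam).sub_const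
            (∑ j ∈ Finset.range (m+1), 1 / ((j : ℝ) + 1)))
        refine (h1.prodMk h2).congr_deriv (Eq.symm ?_)
        simp only [Nat.add_sub_cancel, Prod.mk.injEq]
        have hf : ((Nat.factorial m : ℝ)) ≠ 0 := by positivity
        have hf1 : ((Nat.factorial (m+1) : ℝ)) ≠ 0 := by positivity
        constructor
        · rw [Nat.factorial_succ (m+1)]
          push_cast
          field_simp
        · rw [Finset.sum_range_succ, Nat.factorial_succ m]
          push_cast
          field_simp
          ring
    · -- n = 0
      rw [show ((0:ℤ) + 1) = ((0:ℕ):ℤ) + 1 by norm_num, cp1_pos, cp1_zero]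
      have h1 := (hasDerivAt_const lam (1:ℝ)).div (hasDerivAt_id lam) hlam'
      have h0 : HasDerivAt (fun _ : ℝ => (1:ℝ)/2) 0 lam := hasDerivAt_const _ _
      refine (h0.prodMk h1).congr_deriv (Eq.symm ?_)
      simp only [Prod.mk.injEq]
      constructor <;> norm_num [Nat.factorial]
    · -- n ≥ 1
      obtain ⟨m, rfl⟩ : ∃ m : ℕ, n = (m:ℤ)+1 := ⟨(n-1).toNat, by omega⟩
      rw [show ((m:ℤ) + 1 + 1) = (((m+1:ℕ)):ℤ) + 1 by push_cast; ring, cp1_pos, cp1_pos]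
      have hd := (hasDerivAt_const lam ((-1:ℝ)^(m+1) * ((Nat.factorial (m+1)):ℝ))).div
        (hasDerivAt_pow (m+2) lam) (pow_ne_zero _ hlam')
      have h0 : HasDerivAt (fun _ : ℝ => (0:ℝ)) 0 lam := hasDerivAt_const _ _
      refine (h0.prodMk hd).congr_deriv (Eq.symm ?_)
      simp only [Nat.add_sub_cancel, Prod.mk.injEq]
      have hf1 : ((Nat.factorial (m+1) : ℝ)) ≠ 0 := by positivity
      refine ⟨trivial, ?_⟩
      rw [Nat.factorial_succ (m+1)]
      push_cast
      field_simp
      ring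
  · intro k hk lam hlam
    have hlam' : lam ≠ 0 := hlam.ne'
    obtain ⟨j, rfl⟩ : ∃ j : ℕ, k = j + 1 := ⟨k - 1, by omega⟩
    rw [show (-(((j+1:ℕ)):ℤ)) = -((j:ℤ)+1) by push_cast; ring,
        show (-((j:ℤ)+1) - 1) = -(((j+1:ℕ):ℤ)+1) by push_cast; ring, cp1_neg, cp1_neg]
    have hfj : ((Nat.factorial j : ℝ)) ≠ 0 := by positivity
    have hfj1 : ((Nat.factorial (j+1) : ℝ)) ≠ 0 := by positivity
    rw [Prod.ext_iff]
    constructor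
    · simp only [Prod.smul_def, smul_eq_mul, Prod.fst_sub, Prod.fst_add, Prod.fst]
      rw [Nat.factorial_succ (j+1)]
      push_cast
      field_simp
      ring
    · simp only [Prod.smul_def, smul_eq_mul, Prod.snd_sub, Prod.snd_add, Prod.snd]
      rw [Finset.sum_range_succ, Nat.factorial_succ j]
      push_cast
      field_simp
      ring
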